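/- arXiv:1108.1886 — 2 statements merged into one kernel-verified Lean document; each statement's English description precedes it below -/
import Mathlib

section
/- Let Σ be a fan in ℝ^r such that the support of its (r-1)-dimensional cones equals a union of linear hyperplanes H_1 ∪ … ∪ H_n and Σ is complete. Then for every τ ∈ Σ of dimension r-1 and every σ ∈ Σ, the set σ ∩ span(τ) is a face of σ and hence an element of Σ. -/
open scoped Classical Pointwise BigOperators

noncomputable section

abbrev Vr (r : ℕ) : Type := Fin r → ℝ

/-- The convex cone generated by a finite set of vectors. -/
def coneGen {M : Type*} [AddCommGroup M] [Module ℝ M] (s : Finset M) : Set M :=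
  { x | ∃ c : M → ℝ, (∀ v, 0 ≤ c v) ∧ x = ∑ v ∈ s, c v • v }

/-- Dimension of the linear span of a set. -/
def spanDim {M : Type*} [AddCommGroup M] [Module ℝ M] (s : Set M) : ℕ :=
  Module.finrank ℝ (Submodule.span ℝ s)

/-- A (linear) hyperplane: the kernel of a nonzero linear functional. -/
def IsHyp {M : Type*} [AddCommGroup M] [Module ℝ M] (H : Set M) : Prop :=
  ∃ f : M →ₗ[ℝ] ℝ, f ≠ 0 ∧ H = {x | f x = 0}

/-- A strongly convex rational polyhedral cone with respect to the lattice `N`. -/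
def IsNCone {r : ℕ} (N : AddSubgroup (Vr r)) (σ : Set (Vr r)) : Prop :=
  ∃ s : Finset (Vr r), ↑s ⊆ (N : Set (Vr r)) ∧ σ = coneGen s ∧ σ ∩ (-σ) ⊆ {0}

/-- `τ` is a face of `σ`. -/
def IsFaceOf {M : Type*} [AddCommGroup M] [Module ℝ M] (τ σ : Set M) : Prop :=
  ∃ m : M →ₗ[ℝ] ℝ, (∀ x ∈ σ, 0 ≤ m x) ∧ τ = σ ∩ {x | m x = 0}

/-- A fan in the lattice `N`. -/
structure IsFan {r : ℕ} (N : AddSubgroup (Vr r)) (F : Set (Set (Vr r))) : Prop where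
  finite : F.Finite
  nonempty : F.Nonempty
  cones : ∀ σ ∈ F, IsNCone N σ
  faces : ∀ σ ∈ F, ∀ τ : Set (Vr r), IsFaceOf τ σ → τ ∈ F
  inter : ∀ σ₁ ∈ F, ∀ σ₂ ∈ F, IsFaceOf (σ₁ ∩ σ₂) σ₁ ∧ IsFaceOf (σ₁ ∩ σ₂) σ₂

/-- Completeness: the support is everything. -/
def FanComplete {M : Type*} (F : Set (Set M)) : Prop := ⋃₀ F = Set.univ

/-- Strong symmetry: complete, and the support of the codimension-one cones is a
finite union of hyperplanes. -/
def SSymm {M : Type*} [AddCommGroup M] [Module ℝ M] (F : Set (Set M)) : Prop :=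
  FanComplete F ∧ ∃ Hs : Finset (Set M), (∀ h ∈ Hs, IsHyp h) ∧
    ⋃₀ {τ ∈ F | spanDim τ = Module.finrank ℝ M - 1} = ⋃₀ ↑Hs

/-- Central symmetry. -/
def CSymm {M : Type*} [AddCommGroup M] (F : Set (Set M)) : Prop := ∀ σ ∈ F, -σ ∈ F

/-- `b` is a ℤ-basis of the subgroup `L` of `ℝ^r`. -/
def IsZBasis {r d : ℕ} (L : AddSubgroup (Vr r)) (b : Fin d → Vr r) : Prop :=
  LinearIndependent ℝ b ∧ AddSubgroup.closure (Set.range b) = L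

/-- A (full-rank) lattice in `ℝ^r`. -/
def IsLattice {r : ℕ} (N : AddSubgroup (Vr r)) : Prop :=
  ∃ b : Fin r → Vr r, IsZBasis N b

/-- A cone generated by a part of a ℤ-basis of `L`. -/
def SmoothCone {r : ℕ} (L : AddSubgroup (Vr r)) (σ : Set (Vr r)) : Prop :=
  ∃ (d : ℕ) (b : Fin d → Vr r) (s : Finset (Fin d)),
    IsZBasis L b ∧ σ = coneGen (s.image b)

/-- Chambers of an arrangement: connected components of the complement. -/
def chambers {r : ℕ} (A : Finset (Set (Vr r))) : Set (Set (Vr r)) :=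
  { K | ∃ x ∈ (⋃₀ (A : Set (Set (Vr r))))ᶜ,
      K = connectedComponentIn (⋃₀ (A : Set (Set (Vr r))))ᶜ x }

/-- An open simplicial cone of full dimension. -/
def IsOpenSimplicialCone {r : ℕ} (K : Set (Vr r)) : Prop :=
  ∃ b : Fin r → Vr r, LinearIndependent ℝ b ∧
    K = { x | ∃ c : Fin r → ℝ, (∀ i, 0 < c i) ∧ x = ∑ i, c i • b i }

def ker0 {r : ℕ} (α : Vr r →ₗ[ℝ] ℝ) : Set (Vr r) := {x | α x = 0}

/-- Walls of a chamber `K`. -/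
def walls {r : ℕ} (A : Finset (Set (Vr r))) (K : Set (Vr r)) : Set (Set (Vr r)) :=
  { H | H ∈ A ∧ spanDim (H ∩ closure K) = r - 1 }

/-- The set `B^K` of inward-pointing normals of the walls of `K`. -/
def BK {r : ℕ} (A : Finset (Set (Vr r))) (R : Finset (Vr r →ₗ[ℝ] ℝ)) (K : Set (Vr r)) :
    Finset (Vr r →ₗ[ℝ] ℝ) :=
  R.filter (fun α => ker0 α ∈ walls A K ∧ K ⊆ {x | 0 ≤ α x})

/-- A crystallographic arrangement `(A, R)`. -/
structure IsCrystArr {r : ℕ} (A : Finset (Set (Vr r))) (R : Finset (Vr r →ₗ[ℝ] ℝ)) : Prop where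
  simplicial : ∀ K ∈ chambers A, IsOpenSimplicialCone K
  hyps : (A : Set (Set (Vr r))) = (fun α => ker0 α) '' (R : Set (Vr r →ₗ[ℝ] ℝ))
  nonzero : ∀ α ∈ R, α ≠ 0
  neg_mem : ∀ α ∈ R, -α ∈ R
  reduced : ∀ α ∈ R, ∀ β ∈ R, (∃ c : ℝ, β = c • α) → β = α ∨ β = -α
  integral : ∀ K ∈ chambers A, ∀ β ∈ R,
    β ∈ Submodule.span ℤ ((BK A R K : Set (Vr r →ₗ[ℝ] ℝ)))

/-- The set of all intersections of closed chambers of `A`. -/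
def closedChamberInts {r : ℕ} (A : Finset (Set (Vr r))) : Set (Set (Vr r)) :=
  { σ | ∃ S : Set (Set (Vr r)), S.Nonempty ∧ S ⊆ chambers A ∧ σ = ⋂₀ (closure '' S) }

/-- The lattice dual to `M_R = ∑_{α ∈ R} ℤ α`. -/
def dualLattice {r : ℕ} (R : Finset (Vr r →ₗ[ℝ] ℝ)) : AddSubgroup (Vr r) where
  carrier := { x | ∀ α ∈ R, ∃ k : ℤ, α x = k }
  zero_mem' := fun α _ => ⟨0, by simp⟩
  add_mem' := by
    intro x y hx hy α hα
    obtain ⟨k, hk⟩ := hx α hα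
    obtain ⟨m, hm⟩ := hy α hα
    exact ⟨k + m, by simp [hk, hm]⟩
  neg_mem' := by
    intro x hx α hα
    obtain ⟨k, hk⟩ := hx α hα
    exact ⟨-k, by simp [hk]⟩

/-- The star fan of `δ`, as a collection of cones in the quotient by `E`. -/
def starAt {r : ℕ} (F : Set (Set (Vr r))) (δ : Set (Vr r)) (E : Submodule ℝ (Vr r)) :
    Set (Set (Vr r ⧸ E)) :=
  { τ | ∃ σ ∈ F, δ ⊆ σ ∧ τ = E.mkQ '' σ }

/-- The positive roots `R_+^K` at the chamber `K`. -/
def RplusF {r : ℕ} (A : Finset (Set (Vr r))) (R : Finset (Vr r →ₗ[ℝ] ℝ)) (K : Set (Vr r)) :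
    Finset (Vr r →ₗ[ℝ] ℝ) :=
  R.filter (fun α => α ∈ coneGen (BK A R K))

/-- `ρ^K`, the half-sum of the positive roots at `K`. -/
def rhoK {r : ℕ} (A : Finset (Set (Vr r))) (R : Finset (Vr r →ₗ[ℝ] ℝ)) (K : Set (Vr r)) :
    Vr r →ₗ[ℝ] ℝ :=
  (1/2 : ℝ) • ∑ α ∈ RplusF A R K, α

end

/-! The cone `τ` lies in one of the hyperplanes `H i = ker g`, which is then `span τ`, so it
suffices that `g` has constant sign on every cone of the fan. Otherwise take a cone `δ` minimal
among those on which `g` changes sign, and a positive combination `z ∈ δ ∩ ker g` of points of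
opposite signs: every cone through `z` meets `δ` in a face of `δ` containing both points, hence
in all of `δ` by minimality. So the codimension-one cones through `z` span hyperplanes other than
`ker g`, and some `u ∈ ker g` avoids all of them. But `ker g` is covered by the finitely many
closed codimension-one cones, so one of them contains `z` together with points `z + t • u`,
`t > 0`, and its span contains `u`. -/

open Set Submodule

section ConeGen

variable {M : Type*} [AddCommGroup M] [Module ℝ M]

theorem coneGen_eq_hull (s : Finset M) :
    coneGen s = (PointedCone.hull ℝ (s : Set M) : Set M) := by
  ext x
  constructor
  · rintro ⟨c, hc, rfl⟩
    exact sum_mem fun v hv => PointedCone.smul_mem _ (hc v) (PointedCone.subset_hull hv)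
  · intro hx
    obtain ⟨c, -, rfl⟩ := mem_span_finset.mp hx
    exact ⟨fun v => c v, fun v => (c v).2, rfl⟩

theorem coneGen_mono {s t : Finset M} (h : s ⊆ t) : coneGen s ⊆ coneGen t := by
  simp only [coneGen_eq_hull]
  exact span_mono (by exact_mod_cast h)

theorem coneGen_eq_image (s : Finset M) :
    coneGen s = Fintype.linearCombination ℝ ((↑) : s → M) '' Ici 0 := by
  ext x
  constructor
  · rintro ⟨c, hc, rfl⟩
    exact ⟨fun i => c i, fun i => hc i, by
      rw [Fintype.linearCombination_apply]; exact s.sum_coe_sort fun v => c v • v⟩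
  · rintro ⟨c, hc, rfl⟩
    refine ⟨fun v => if h : v ∈ s then c ⟨v, h⟩ else 0, fun v => ?_, ?_⟩
    · dsimp only
      split_ifs
      exacts [hc _, le_rfl]
    · rw [Fintype.linearCombination_apply, ← s.sum_coe_sort]
      simp

theorem exists_mem_coneGen_erase {s : Finset M} {x : M} (hx : x ∈ coneGen s)
    (hs : ¬LinearIndepOn ℝ id (s : Set M)) : ∃ v ∈ s, x ∈ coneGen (s.erase v) := by
  obtain ⟨c, hc, rfl⟩ := hx
  obtain ⟨d, hd, hpos⟩ : ∃ d : M → ℝ, ∑ v ∈ s, d v • v = 0 ∧ ∃ v ∈ s, 0 < d v := by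
    obtain ⟨d, hd, v, hv, hdv⟩ := not_linearIndepOn_finset_iff.mp hs
    rcases hdv.lt_or_gt with hneg | hpos
    · exact ⟨-d, by simpa using hd, v, hv, by simpa using hneg⟩
    · exact ⟨d, by simpa using hd, v, hv, hpos⟩
  -- Subtract the largest multiple of the relation `d` that keeps all coefficients nonnegative.
  obtain ⟨v₀, hv₀, hmin⟩ := (s.filter (0 < d ·)).exists_min_image (fun v => c v / d v)
    (by simpa [Finset.filter_nonempty_iff] using hpos)
  rw [Finset.mem_filter] at hv₀
  set t := c v₀ / d v₀
  refine ⟨v₀, hv₀.1, fun v => if v ∈ s then c v - t * d v else 0, fun v => ?_, ?_⟩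
  · dsimp only
    split_ifs with hv
    · rcases le_or_gt (d v) 0 with hdv | hdv
      · nlinarith [hc v, div_nonneg (hc v₀) hv₀.2.le]
      · have := (le_div_iff₀ hdv).mp (hmin v (Finset.mem_filter.mpr ⟨hv, hdv⟩))
        linarith
    · exact le_rfl
  · have hzero : (c v₀ - t * d v₀) • v₀ = 0 := by
      rw [div_mul_cancel₀ _ hv₀.2.ne', sub_self, zero_smul]
    calc ∑ v ∈ s, c v • v = ∑ v ∈ s, (c v - t * d v) • v := by
          simp [sub_smul, Finset.sum_sub_distrib, mul_smul, ← Finset.smul_sum, hd]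
      _ = ∑ v ∈ s.erase v₀, (c v - t * d v) • v :=
          (s.sum_erase (f := fun v => (c v - t * d v) • v) hzero).symm
      _ = _ := Finset.sum_congr rfl fun v hv => by
          simp only [if_pos (Finset.mem_of_mem_erase hv)]

theorem exists_linearIndepOn_subset_mem_coneGen {s : Finset M} {x : M} (hx : x ∈ coneGen s) :
    ∃ t ⊆ s, LinearIndepOn ℝ id (t : Set M) ∧ x ∈ coneGen t := by
  induction s using Finset.strongInduction with
  | H s ih =>
    by_cases hs : LinearIndepOn ℝ id (s : Set M)
    · exact ⟨s, subset_rfl, hs, hx⟩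
    obtain ⟨v, hv, hxv⟩ := exists_mem_coneGen_erase hx hs
    obtain ⟨t, hts, ht, hxt⟩ := ih _ (Finset.erase_ssubset hv) hxv
    exact ⟨t, hts.trans (s.erase_subset v), ht, hxt⟩

variable [TopologicalSpace M] [IsTopologicalAddGroup M] [ContinuousSMul ℝ M] [T2Space M]

theorem isClosed_coneGen_of_linearIndepOn {s : Finset M} (hs : LinearIndepOn ℝ id (s : Set M)) :
    IsClosed (coneGen s) := by
  rw [coneGen_eq_image]
  have hinj := linearIndependent_iff_injective_fintypeLinearCombination.mp hs
  exact (LinearMap.isClosedEmbedding_of_injective (LinearMap.ker_eq_bot.mpr hinj)).isClosedMap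
    _ isClosed_Ici

theorem isClosed_coneGen (s : Finset M) : IsClosed (coneGen s) := by
  have hunion : coneGen s =
      ⋃ t ∈ {t : Finset M | t ⊆ s ∧ LinearIndepOn ℝ id (t : Set M)}, coneGen t := by
    refine (Subset.antisymm (fun x hx => ?_) (iUnion₂_subset fun t ht => coneGen_mono ht.1))
    obtain ⟨t, hts, ht, hxt⟩ := exists_linearIndepOn_subset_mem_coneGen hx
    exact mem_biUnion ⟨hts, ht⟩ hxt
  have hfin : {t : Finset M | t ⊆ s ∧ LinearIndepOn ℝ id (t : Set M)}.Finite :=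
    s.powerset.finite_toSet.subset fun t ht => Finset.mem_powerset.mpr ht.1
  rw [hunion]
  exact hfin.isClosed_biUnion fun t ht => isClosed_coneGen_of_linearIndepOn ht.2

end ConeGen

theorem Submodule.subsingleton_setOf_add_smul_mem {K V : Type*} [DivisionRing K]
    [AddCommGroup V] [Module K V] {W : Submodule K V} {u x : V} (h : u ∉ W ∨ x ∉ W) :
    {t : K | u + t • x ∈ W}.Subsingleton := by
  intro t ht s hs
  by_contra hne
  have hx : x ∈ W := by
    have := W.smul_mem (t - s)⁻¹ (W.sub_mem ht hs)
    rwa [add_sub_add_left_eq_sub, ← sub_smul, smul_smul, inv_mul_cancel₀ (sub_ne_zero.mpr hne),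
      one_smul] at this
  have hu : u ∈ W := by simpa using W.sub_mem ht (W.smul_mem t hx)
  exact h.elim (· hu) (· hx)

namespace PointedCone

variable {M : Type*} [AddCommGroup M] [Module ℝ M]

theorem exists_forall_notMem {C : PointedCone ℝ M} {W : Set (Submodule ℝ M)} (hW : W.Finite)
    (hC : ∀ w ∈ W, ¬(C : Set M) ⊆ w) : ∃ u ∈ C, ∀ w ∈ W, u ∉ w := by
  induction W, hW using Set.Finite.induction_on with
  | empty => exact ⟨0, C.zero_mem, by simp⟩
  | @insert w₀ W _ hW ih =>
    obtain ⟨u, huC, hu⟩ := ih fun w hw => hC w (mem_insert_of_mem _ hw)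
    obtain ⟨x, hxC, hxw₀⟩ := not_subset.mp (hC w₀ (mem_insert _ _))
    have hbad : (⋃ w ∈ insert w₀ W, {t : ℝ | u + t • x ∈ w}).Finite := by
      refine (hW.insert w₀).biUnion fun w hw => (subsingleton_setOf_add_smul_mem ?_).finite
      rcases hw with rfl | hw
      exacts [Or.inr hxw₀, Or.inl (hu w hw)]
    obtain ⟨t, ht, htbad⟩ := ((Ioi_infinite (0 : ℝ)).sdiff hbad).nonempty
    refine ⟨u + t • x, C.add_mem huC (C.smul_mem (le_of_lt ht) hxC), fun w hw hmem => ?_⟩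
    exact htbad (mem_biUnion hw hmem)

theorem exists_subset_of_subset_iUnion {C : PointedCone ℝ M} {ι : Type*} [Finite ι]
    {W : ι → Submodule ℝ M} (hC : (C : Set M) ⊆ ⋃ i, (W i : Set M)) :
    ∃ i, (C : Set M) ⊆ W i := by
  by_contra! h
  obtain ⟨u, huC, hu⟩ := exists_forall_notMem (finite_range W) (by simpa using h)
  obtain ⟨i, hi⟩ := mem_iUnion.mp (hC huC)
  exact hu _ (mem_range_self i) hi

end PointedCone

section Faces

variable {M : Type*} [AddCommGroup M] [Module ℝ M]

theorem isFaceOf_inter_ker {σ : Set M} {f : M →ₗ[ℝ] ℝ}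
    (h : (∀ x ∈ σ, 0 ≤ f x) ∨ ∀ x ∈ σ, f x ≤ 0) : IsFaceOf (σ ∩ LinearMap.ker f) σ := by
  rcases h with h | h
  · exact ⟨f, h, rfl⟩
  · exact ⟨-f, fun x hx => by simpa using h x hx, by ext; simp⟩

theorem IsFaceOf.mem_of_smul_add_smul_mem {τ σ : Set M} (h : IsFaceOf τ σ) {a b : M}
    (ha : a ∈ σ) (hb : b ∈ σ) {p q : ℝ} (hp : 0 < p) (hq : 0 < q) (hab : p • a + q • b ∈ τ) :
    a ∈ τ ∧ b ∈ τ := by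
  obtain ⟨m, hm, rfl⟩ := h
  have hsum : p * m a + q * m b = 0 := by simpa using hab.2
  have hma := mul_nonneg hp.le (hm a ha)
  have hmb := mul_nonneg hq.le (hm b hb)
  exact ⟨⟨ha, (mul_eq_zero.mp (by linarith : p * m a = 0)).resolve_left hp.ne'⟩,
    ⟨hb, (mul_eq_zero.mp (by linarith : q * m b = 0)).resolve_left hq.ne'⟩⟩

end Faces

theorem exists_mem_inter_nonempty_of_mem_closure {X : Type*} [TopologicalSpace X]
    {S : Set (Set X)} (hS : S.Finite) (hclosed : ∀ K ∈ S, IsClosed K) {A : Set X}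
    (hA : A ⊆ ⋃₀ S) {a : X} (ha : a ∈ closure A) : ∃ K ∈ S, a ∈ K ∧ (A ∩ K).Nonempty := by
  rw [← inter_eq_left.mpr hA, sUnion_eq_biUnion, inter_iUnion₂, hS.closure_biUnion,
    mem_iUnion₂] at ha
  obtain ⟨K, hK, haK⟩ := ha
  exact ⟨K, hK, closure_minimal inter_subset_right (hclosed K hK) haK,
    closure_nonempty_iff.mp ⟨a, haK⟩⟩

theorem finrank_ker_eq_sub_one {r : ℕ} {f : Vr r →ₗ[ℝ] ℝ} (hf : f ≠ 0) :
    Module.finrank ℝ (LinearMap.ker f) = r - 1 := by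
  have := Module.Dual.finrank_ker_add_one_of_ne_zero hf
  rw [Module.finrank_fin_fun] at this
  omega

namespace IsFan

variable {r : ℕ} {N : AddSubgroup (Vr r)} {F : Set (Set (Vr r))}

theorem exists_finset_eq_hull (hfan : IsFan N F) {σ : Set (Vr r)} (hσ : σ ∈ F) :
    ∃ s : Finset (Vr r), σ = PointedCone.hull ℝ (s : Set (Vr r)) := by
  obtain ⟨s, -, rfl, -⟩ := hfan.cones σ hσ
  exact ⟨s, coneGen_eq_hull s⟩

theorem isClosed (hfan : IsFan N F) {σ : Set (Vr r)} (hσ : σ ∈ F) : IsClosed σ := by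
  obtain ⟨s, -, rfl, -⟩ := hfan.cones σ hσ
  exact isClosed_coneGen s

theorem exists_forall_mem_of_sign_change (hfan : IsFan N F) (f : Vr r →ₗ[ℝ] ℝ)
    {σ : Set (Vr r)} (hσ : σ ∈ F) {a b : Vr r} (ha : a ∈ σ) (hb : b ∈ σ) (hfa : 0 < f a)
    (hfb : f b < 0) : ∃ z x, f z = 0 ∧ f x ≠ 0 ∧ ∀ τ ∈ F, z ∈ τ → x ∈ τ := by
  have hfin := hfan.finite.subset (sep_subset F fun δ => ∃ x ∈ δ, ∃ y ∈ δ, 0 < f x ∧ f y < 0)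
  obtain ⟨δ, ⟨hδF, x, hx, y, hy, hfx, hfy⟩, hmin⟩ :=
    hfin.exists_minimal ⟨σ, hσ, a, ha, b, hb, hfa, hfb⟩
  obtain ⟨s, hδ⟩ := hfan.exists_finset_eq_hull hδF
  set z := f x • y + (-f y) • x
  have hzδ : z ∈ δ := by
    rw [hδ] at hx hy ⊢
    exact add_mem (PointedCone.smul_mem _ hfx.le hy) (PointedCone.smul_mem _ (by linarith) hx)
  refine ⟨z, x, by simp [z]; ring, hfx.ne', fun τ hτ hzτ => ?_⟩
  -- The face `δ ∩ τ` contains `z`, hence `x` and `y`, so it equals `δ` by minimality.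
  have hface := (hfan.inter δ hδF τ hτ).1
  obtain ⟨hyτ, hxτ⟩ := hface.mem_of_smul_add_smul_mem hy hx hfx (neg_pos.mpr hfy) ⟨hzδ, hzτ⟩
  exact (hmin ⟨hfan.faces δ hδF _ hface, x, hxτ, y, hyτ, hfx, hfy⟩ inter_subset_left hx).2

theorem nonneg_or_nonpos_of_ker_subset (hfan : IsFan N F) {f : Vr r →ₗ[ℝ] ℝ} (hf : f ≠ 0)
    (hker : (LinearMap.ker f : Set (Vr r)) ⊆ ⋃₀ {τ ∈ F | spanDim τ = r - 1})
    {σ : Set (Vr r)} (hσ : σ ∈ F) : (∀ x ∈ σ, 0 ≤ f x) ∨ ∀ x ∈ σ, f x ≤ 0 := by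
  by_contra! h
  obtain ⟨⟨b, hb, hfb⟩, ⟨a, ha, hfa⟩⟩ := h
  obtain ⟨z, x, hz, hfx, hzx⟩ := hfan.exists_forall_mem_of_sign_change f hσ ha hb hfa hfb
  set S := {τ ∈ F | spanDim τ = r - 1}
  have hspan : ∀ τ ∈ S, z ∈ τ → ¬(LinearMap.ker f : Set (Vr r)) ⊆ span ℝ τ := by
    rintro τ ⟨hτ, hdim⟩ hzτ hle
    have heq : LinearMap.ker f = span ℝ τ :=
      eq_of_le_of_finrank_eq hle (by rw [finrank_ker_eq_sub_one hf]; exact hdim.symm)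
    exact hfx (heq ▸ subset_span (hzx τ hτ hzτ) : x ∈ LinearMap.ker f)
  have hSfin : S.Finite := hfan.finite.subset (sep_subset _ _)
  obtain ⟨u, hu, hu'⟩ :=
    PointedCone.exists_forall_notMem (C := PointedCone.ofSubmodule (LinearMap.ker f))
    ((hSfin.subset (sep_subset S (z ∈ ·))).image fun τ => span ℝ τ)
    (by rintro _ ⟨τ, ⟨hτS, hzτ⟩, rfl⟩; exact hspan τ hτS hzτ)
  -- The ray from `z` in direction `u` lies in `ker f`, which is covered by the finitely many
  -- closed cones of `S`; one of them contains `z` and a point of the ray, so its span contains `u`.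
  have hray : (fun t : ℝ => z + t • u) '' Ioi 0 ⊆ ⋃₀ S := by
    rintro _ ⟨t, -, rfl⟩
    exact hker (add_mem hz (smul_mem _ t hu))
  have hzcl : z ∈ closure ((fun t : ℝ => z + t • u) '' Ioi 0) := by
    refine image_closure_subset_closure_image (by fun_prop) ⟨0, ?_, by simp⟩
    simp
  obtain ⟨τ, hτS, hzτ, _, ⟨t, ht, rfl⟩, htτ⟩ := exists_mem_inter_nonempty_of_mem_closure
    hSfin (fun τ hτ => hfan.isClosed hτ.1) hray hzcl
  refine hu' _ ⟨τ, ⟨hτS, hzτ⟩, rfl⟩ ?_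
  have : u = t⁻¹ • ((z + t • u) - z) := by
    rw [add_sub_cancel_left, smul_smul, inv_mul_cancel₀ (ne_of_gt ht), one_smul]
  rw [this]
  exact smul_mem _ _ (sub_mem (subset_span htτ) (subset_span hzτ))

end IsFan

theorem stmt3_general {r n : ℕ} (N : AddSubgroup (Vr r)) (F : Set (Set (Vr r)))
    (hfan : IsFan N F)
    (H : Fin n → Set (Vr r)) (hH : ∀ i, IsHyp (H i))
    (hsupp : ⋃₀ {τ ∈ F | spanDim τ = r - 1} = ⋃ i, H i) :
    ∀ τ ∈ F, spanDim τ = r - 1 → ∀ σ ∈ F,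
      IsFaceOf (σ ∩ ↑(Submodule.span ℝ τ)) σ ∧ σ ∩ ↑(Submodule.span ℝ τ) ∈ F := by
  intro τ hτF hdim σ hσF
  choose g hg hgH using hH
  have hHker : ∀ i, H i = LinearMap.ker (g i) := fun i => (hgH i).trans (by ext; simp)
  obtain ⟨s, hτs⟩ := hfan.exists_finset_eq_hull hτF
  have hτH : τ ⊆ ⋃ i, (LinearMap.ker (g i) : Set (Vr r)) := by
    simpa only [hsupp, hHker] using subset_sUnion_of_mem (show τ ∈ {τ ∈ F | spanDim τ = r - 1}
      from ⟨hτF, hdim⟩)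
  obtain ⟨i, hτi⟩ := PointedCone.exists_subset_of_subset_iUnion (hτs ▸ hτH)
  have hspan : span ℝ τ = LinearMap.ker (g i) :=
    eq_of_le_of_finrank_eq (span_le.mpr (hτs ▸ hτi))
      (by rw [finrank_ker_eq_sub_one (hg i)]; exact hdim)
  have hker : (LinearMap.ker (g i) : Set (Vr r)) ⊆ ⋃₀ {τ ∈ F | spanDim τ = r - 1} := by
    rw [hsupp, ← hHker]
    exact subset_iUnion H i
  have hface := isFaceOf_inter_ker (hfan.nonneg_or_nonpos_of_ker_subset (hg i) hker hσF)
  rw [hspan]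
  exact ⟨hface, hfan.faces σ hσF _ hface⟩

/-- in a strongly symmetric (complete) fan, `σ ∩ span τ` is a face of `σ`,
hence an element of the fan, for all `τ ∈ Σ(r-1)`, `σ ∈ Σ`. -/
theorem stmt3 {r n : ℕ} (N : AddSubgroup (Vr r)) (F : Set (Set (Vr r)))
    (hN : IsLattice N) (hfan : IsFan N F) (hcomp : FanComplete F)
    (H : Fin n → Set (Vr r)) (hH : ∀ i, IsHyp (H i))
    (hsupp : ⋃₀ {τ ∈ F | spanDim τ = r - 1} = ⋃ i, H i) :
    ∀ τ ∈ F, spanDim τ = r - 1 → ∀ σ ∈ F,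
      IsFaceOf (σ ∩ ↑(Submodule.span ℝ τ)) σ ∧ σ ∩ ↑(Submodule.span ℝ τ) ∈ F :=
  stmt3_general N F hfan H hH hsupp
end

section
/- Let Σ be a strongly symmetric smooth fan in a lattice N ⊆ ℝ^r. Then the arrangement A = { span(τ) : τ ∈ Σ(r-1) } is a simplicial arrangement, and there exists a finite set R ⊆ (ℝ^r)* with A = {α^⊥ : α ∈ R}, ℝα ∩ R = {±α} for all α ∈ R, such that (A, R) is a crystallographic arrangement. Concretely, R can be taken as the union over all maximal cones σ ∈ Σ(r) of the dual bases of the ℤ-bases of N generating σ. -/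
open scoped Classical Pointwise BigOperators

/-! Strong symmetry forces the span of each codimension-one cone into the codimension-one
skeleton, so the hyperplanes of `A` miss the interiors of the maximal cones, and the chambers of
`A` are exactly these interiors, which are open simplicial cones. The roots are the dual-basis
covectors of the maximal cones. A root is integral on `N` and takes the value `1` on a lattice
vector, so proportional roots agree up to sign; each hyperplane of `A` is a wall of maximal cones
on both of its sides, which makes `-α` a root; and in the chamber of the maximal cone with basis
`b`, every root `β` is `∑ β(bᵢ) bᵢ*` with integral coefficients. -/

open Module Set Filter Topology

section Cone

variable {M : Type*} [AddCommGroup M] [Module ℝ M]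

theorem mem_coneGen_of_mem {s : Finset M} {v : M} (hv : v ∈ s) : v ∈ coneGen s :=
  ⟨fun w => if w = v then 1 else 0, fun w => by dsimp only; split_ifs <;> norm_num, by
    simp [ite_smul, hv]⟩

theorem sum_mem_coneGen (s : Finset M) : ∑ v ∈ s, v ∈ coneGen s :=
  ⟨fun _ => 1, fun _ => zero_le_one, by simp⟩

theorem convex_coneGen (s : Finset M) : Convex ℝ (coneGen s) := by
  rintro x ⟨c, hc, rfl⟩ y ⟨d, hd, rfl⟩ a b ha hb -
  refine ⟨fun v => a * c v + b * d v,
    fun v => add_nonneg (mul_nonneg ha (hc v)) (mul_nonneg hb (hd v)), ?_⟩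
  simp only [Finset.smul_sum, ← Finset.sum_add_distrib, add_smul, mul_smul]

theorem span_coneGen (s : Finset M) :
    Submodule.span ℝ (coneGen s) = Submodule.span ℝ (s : Set M) := by
  refine le_antisymm (Submodule.span_le.2 ?_)
    (Submodule.span_mono fun v hv => mem_coneGen_of_mem hv)
  rintro x ⟨c, -, rfl⟩
  exact Submodule.sum_mem _ fun v hv => Submodule.smul_mem _ _ (Submodule.subset_span hv)

theorem apply_eq_zero_of_mem_coneGen {s : Finset M} {m : M →ₗ[ℝ] ℝ}
    (hm : ∀ v ∈ s, 0 ≤ m v) (h0 : m (∑ v ∈ s, v) = 0) {x : M} (hx : x ∈ coneGen s) :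
    m x = 0 := by
  rw [map_sum] at h0
  have hgen := (Finset.sum_eq_zero_iff_of_nonneg hm).1 h0
  obtain ⟨c, -, rfl⟩ := hx
  exact (map_sum ..).trans (Finset.sum_eq_zero fun v hv => by rw [map_smul, hgen v hv, smul_zero])

theorem IsFaceOf.coneGen_subset {s : Finset M} {σ : Set M}
    (h : IsFaceOf (coneGen s ∩ σ) (coneGen s)) (hsum : ∑ v ∈ s, v ∈ σ) : coneGen s ⊆ σ := by
  obtain ⟨m, hm, heq⟩ := h
  have hsum' : ∑ v ∈ s, v ∈ coneGen s ∩ σ := ⟨sum_mem_coneGen s, hsum⟩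
  rw [heq] at hsum'
  intro x hx
  have : x ∈ coneGen s ∩ {x | m x = 0} :=
    ⟨hx, apply_eq_zero_of_mem_coneGen (fun v hv => hm v (mem_coneGen_of_mem hv)) hsum'.2 hx⟩
  rw [← heq] at this
  exact this.2

theorem LinearMap.eq_apply_smul_of_ker_le {α g : M →ₗ[ℝ] ℝ} {w : M} (hw : α w = 1)
    (h : LinearMap.ker α ≤ LinearMap.ker g) : g = g w • α := by
  ext v
  have : v - α v • w ∈ LinearMap.ker g := h <| by simp [hw]
  simp only [LinearMap.mem_ker, map_sub, map_smul, smul_eq_mul, sub_eq_zero] at this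
  simp [this, mul_comm]

end Cone

section Basis

variable {M : Type*} [AddCommGroup M] [Module ℝ M] {ι : Type*} (B : Basis ι ℝ M)

theorem Module.Basis.coord_sum_smul [DecidableEq ι] (s : Finset ι) (t : ι → ℝ) (j : ι) :
    B.coord j (∑ i ∈ s, t i • B i) = if j ∈ s then t j else 0 := by
  simp [Finsupp.single_apply]

theorem mem_coneGen_image_basis [DecidableEq M] [Fintype ι] [DecidableEq ι] {s : Finset ι} {x : M} :
    x ∈ coneGen (s.image B) ↔ (∀ i ∈ s, 0 ≤ B.coord i x) ∧ ∀ i ∉ s, B.coord i x = 0 := by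
  constructor
  · rintro ⟨c, hc, rfl⟩
    rw [Finset.sum_image fun _ _ _ _ h => B.injective h]
    simp only [B.coord_sum_smul]
    exact ⟨fun i hi => by simpa [hi] using hc (B i), fun i hi => by simp [hi]⟩
  · rintro ⟨hpos, hzero⟩
    refine ⟨Function.extend B (B.coord · x) 0, fun v => ?_, ?_⟩
    · by_cases hv : ∃ i, B i = v
      · obtain ⟨i, rfl⟩ := hv
        rw [B.injective.extend_apply]
        by_cases hi : i ∈ s
        exacts [hpos i hi, (hzero i hi).ge]
      · rw [Function.extend_apply' _ _ _ hv]; rfl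
    · rw [Finset.sum_image fun _ _ _ _ h => B.injective h]
      simp only [B.injective.extend_apply]
      conv_lhs => rw [← B.sum_repr x]
      refine (Finset.sum_subset s.subset_univ fun i _ hi => ?_).symm
      rw [← B.coord_apply, hzero i hi, zero_smul]

theorem mem_coneGen_univ_image_basis [DecidableEq M] [Fintype ι] [DecidableEq ι] {x : M} :
    x ∈ coneGen (Finset.univ.image B) ↔ ∀ i, 0 ≤ B.coord i x := by
  simp [mem_coneGen_image_basis]

theorem coneGen_univ_image_basis_inter_ker [DecidableEq M] [Fintype ι] [DecidableEq ι] (i : ι) :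
    coneGen (Finset.univ.image B) ∩ {x | B.coord i x = 0} =
      coneGen ((Finset.univ.erase i).image B) := by
  ext x
  rw [mem_inter_iff, mem_coneGen_univ_image_basis, mem_coneGen_image_basis]
  simp only [Finset.mem_erase, Finset.mem_univ, and_true, not_not]
  constructor
  · rintro ⟨hpos, hi⟩
    exact ⟨fun j _ => hpos j, fun j hj => hj ▸ hi⟩
  · rintro ⟨hpos, hi⟩
    refine ⟨fun j => ?_, hi i rfl⟩
    by_cases hj : j = i
    exacts [(hi j hj).ge, hpos j hj]

theorem span_coneGen_image_basis [DecidableEq M] (s : Finset ι) :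
    Submodule.span ℝ (coneGen (s.image B)) = Submodule.span ℝ (B '' s) := by
  rw [span_coneGen, Finset.coe_image]

theorem spanDim_coneGen_image_basis [DecidableEq M] (s : Finset ι) :
    spanDim (coneGen (s.image B)) = s.card := by
  rw [spanDim, span_coneGen_image_basis, image_eq_range]
  exact (finrank_span_eq_card (B.linearIndependent.comp _ Subtype.val_injective)).trans (by simp)

theorem span_coneGen_erase_eq_ker [DecidableEq M] [Fintype ι] [DecidableEq ι] (i : ι) :
    Submodule.span ℝ (coneGen ((Finset.univ.erase i).image B)) = LinearMap.ker (B.coord i) := by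
  ext x
  rw [span_coneGen_image_basis, B.mem_span_image, LinearMap.mem_ker, B.coord_apply]
  simp [Set.subset_def, Finsupp.mem_support_iff, not_imp_comm]

end Basis

section Topology

variable {E : Type*} [NormedAddCommGroup E] [NormedSpace ℝ E] [DecidableEq E]
  {ι : Type*} [Fintype ι] [DecidableEq ι] (B : Basis ι ℝ E)

theorem coneGen_univ_image_basis_eq_preimage :
    coneGen (Finset.univ.image B) = B.equivFunL ⁻¹' univ.pi fun _ => Ici 0 := by
  ext x
  simp [mem_coneGen_univ_image_basis, Pi.le_def]

theorem isClosed_coneGen_univ_image_basis : IsClosed (coneGen (Finset.univ.image B)) := by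
  rw [coneGen_univ_image_basis_eq_preimage]
  exact (isClosed_set_pi fun _ _ => isClosed_Ici).preimage B.equivFunL.continuous

theorem interior_coneGen_univ_image_basis :
    interior (coneGen (Finset.univ.image B)) = {x | ∀ i, 0 < B.coord i x} := by
  rw [coneGen_univ_image_basis_eq_preimage,
    ← B.equivFunL.isOpenMap.preimage_interior_eq_interior_preimage B.equivFunL.continuous,
    interior_pi_set finite_univ]
  ext x
  simp

theorem closure_interior_coneGen_univ_image_basis :
    closure (interior (coneGen (Finset.univ.image B))) = coneGen (Finset.univ.image B) := by
  have h := B.equivFunL.isOpenMap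
  have hc := B.equivFunL.continuous
  rw [coneGen_univ_image_basis_eq_preimage, ← h.preimage_interior_eq_interior_preimage hc,
    ← h.preimage_closure_eq_closure_preimage hc, interior_pi_set finite_univ, closure_pi_set]
  simp

end Topology

theorem Submodule.exists_eq_top_of_isOpen_subset_biUnion {E : Type*} [NormedAddCommGroup E]
    [NormedSpace ℝ E] [FiniteDimensional ℝ E] {ι : Type*} {t : Set ι} (ht : t.Finite)
    (p : ι → Submodule ℝ E) {U : Set E} (hU : IsOpen U) (hne : U.Nonempty)
    (hcover : U ⊆ ⋃ i ∈ t, (p i : Set E)) : ∃ i ∈ t, p i = ⊤ := by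
  by_contra! hp
  have hdense : Dense (⋂ i ∈ t, (p i : Set E)ᶜ) :=
    dense_biInter_of_isOpen (fun i _ => (p i).closed_of_finiteDimensional.isOpen_compl)
      ht.countable fun i hi => interior_eq_empty_iff_dense_compl.1 <| by
        by_contra h
        exact hp i hi ((p i).eq_top_of_nonempty_interior' (nonempty_iff_ne_empty.2 h))
  obtain ⟨x, hxU, hx⟩ := hdense.inter_open_nonempty U hU hne
  obtain ⟨i, hi, hxi⟩ := mem_iUnion₂.1 (hcover hxU)
  exact mem_iInter₂.1 hx i hi hxi

theorem exists_mem_of_mem_closure_of_subset_biUnion {X : Type*} [TopologicalSpace X]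
    {ι : Type*} {t : Set ι} (ht : t.Finite) {C : ι → Set X} (hC : ∀ i ∈ t, IsClosed (C i))
    {P : Set X} (hP : P ⊆ ⋃ i ∈ t, C i) {x : X} (hx : x ∈ closure P) :
    ∃ i ∈ t, x ∈ C i ∧ (C i ∩ P).Nonempty := by
  have hPsub : P ⊆ ⋃ i ∈ t, C i ∩ P := fun p hp => by
    obtain ⟨i, hi, hpi⟩ := mem_iUnion₂.1 (hP hp)
    exact mem_iUnion₂.2 ⟨i, hi, hpi, hp⟩
  obtain ⟨i, hi, hxi⟩ :=
    mem_iUnion₂.1 (ht.closure_biUnion (fun i => C i ∩ P) ▸ closure_mono hPsub hx)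
  exact ⟨i, hi, closure_minimal inter_subset_left (hC i hi) hxi,
    closure_nonempty_iff.1 ⟨x, hxi⟩⟩

/-- `coneGen (s.image B)` contains the image of the open positive orthant under
`t ↦ ∑ i ∈ s, t i • B i`, which finitely many proper subspaces cannot cover. -/
theorem exists_forall_apply_eq_zero_of_coneGen_subset_biUnion {M : Type*} [AddCommGroup M]
    [Module ℝ M] [DecidableEq M] {ι : Type*} [Fintype ι] [DecidableEq ι] (B : Basis ι ℝ M)
    (s : Finset ι) {κ : Type*} {t : Set κ} (ht : t.Finite) (f : κ → M →ₗ[ℝ] ℝ)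
    (hcover : coneGen (s.image B) ⊆ ⋃ k ∈ t, (LinearMap.ker (f k) : Set M)) :
    ∃ k ∈ t, ∀ i ∈ s, f k (B i) = 0 := by
  let g : (ι → ℝ) →ₗ[ℝ] M := ∑ i ∈ s, (LinearMap.proj i).smulRight (B i)
  have hg : ∀ c, g c = ∑ i ∈ s, c i • B i := fun c => by simp [g]
  have hpos : (univ.pi fun _ => Ioi 0) ⊆ ⋃ k ∈ t, (LinearMap.ker (f k ∘ₗ g) : Set (ι → ℝ)) := by
    intro x hx
    have hgx : g x ∈ coneGen (s.image B) := by
      rw [hg, mem_coneGen_image_basis]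
      simp only [B.coord_sum_smul]
      exact ⟨fun i hi => by simpa [hi] using (hx i (mem_univ i)).le, fun i hi => by simp [hi]⟩
    simpa using hcover hgx
  obtain ⟨k, hk, htop⟩ := Submodule.exists_eq_top_of_isOpen_subset_biUnion ht _
    (isOpen_set_pi finite_univ fun _ _ => isOpen_Ioi) ⟨1, by simp⟩ hpos
  refine ⟨k, hk, fun i hi => ?_⟩
  have hi' : Pi.single i 1 ∈ LinearMap.ker (f k ∘ₗ g) := htop ▸ Submodule.mem_top
  simpa [hg, Pi.single_apply, hi] using hi'

section Fan

variable {r : ℕ} {N : AddSubgroup (Vr r)} {F : Set (Set (Vr r))}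

theorem SSymm.finrank_pos {M : Type*} [AddCommGroup M] [Module ℝ M] [FiniteDimensional ℝ M]
    {F : Set (Set M)} (hss : SSymm F) : 0 < finrank ℝ M := by
  obtain ⟨Hs, hHs, hskel⟩ := hss.2
  by_contra! h0
  have : Subsingleton M := finrank_zero_iff.1 (Nat.le_zero.1 h0)
  obtain ⟨σ, hσF, hσ0⟩ := mem_sUnion.1 (hss.1 ▸ mem_univ (0 : M))
  have hσ : spanDim σ = finrank ℝ M - 1 := by
    have := Submodule.finrank_le (Submodule.span ℝ σ)
    rw [spanDim]
    omega
  have h0 : (0 : M) ∈ ⋃₀ {τ ∈ F | spanDim τ = finrank ℝ M - 1} := ⟨σ, ⟨hσF, hσ⟩, hσ0⟩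
  obtain ⟨h, hh, -⟩ := mem_sUnion.1 (hskel ▸ h0)
  obtain ⟨f, hf, -⟩ := hHs h hh
  exact hf (LinearMap.ext fun x => by rw [Subsingleton.elim x 0, map_zero, LinearMap.zero_apply])

theorem IsZBasis.span_eq {d : ℕ} {b : Fin d → Vr r} (hb : IsZBasis N b) :
    Submodule.span ℝ (N : Set (Vr r)) = Submodule.span ℝ (range b) := by
  refine le_antisymm (Submodule.span_le.2 ?_)
    (Submodule.span_mono (hb.2 ▸ AddSubgroup.subset_closure))
  rw [← hb.2]
  exact (AddSubgroup.closure_le (Submodule.span ℝ (range b)).toAddSubgroup).2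
    Submodule.subset_span

theorem IsZBasis.card_eq (hN : IsLattice N) {d : ℕ} {b : Fin d → Vr r} (hb : IsZBasis N b) :
    d = r := by
  obtain ⟨b₀, hb₀⟩ := hN
  have h := congrArg (fun p : Submodule ℝ (Vr r) => finrank ℝ p)
    (hb.span_eq.symm.trans hb₀.span_eq)
  simpa [finrank_span_eq_card hb.1, finrank_span_eq_card hb₀.1] using h

theorem IsZBasis.apply_mem {d : ℕ} {b : Fin d → Vr r} (hb : IsZBasis N b) (i : Fin d) :
    b i ∈ N :=
  hb.2 ▸ AddSubgroup.subset_closure (mem_range_self i)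

theorem IsZBasis.exists_coord_eq_intCast {B : Basis (Fin r) ℝ (Vr r)} (hB : IsZBasis N B)
    {x : Vr r} (hx : x ∈ N) (i : Fin r) : ∃ k : ℤ, B.coord i x = k := by
  have hle : N ≤ (Int.castAddHom ℝ).range.comap (B.coord i).toAddMonoidHom := by
    rw [← hB.2, AddSubgroup.closure_le]
    rintro _ ⟨j, rfl⟩
    by_cases h : j = i
    · exact ⟨1, by simp [h]⟩
    · exact ⟨0, by simp [h]⟩
  obtain ⟨k, hk⟩ := hle hx
  exact ⟨k, hk.symm⟩

theorem SmoothCone.exists_basis (hN : IsLattice N) {σ : Set (Vr r)} (hσ : SmoothCone N σ) :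
    ∃ (B : Basis (Fin r) ℝ (Vr r)) (s : Finset (Fin r)),
      IsZBasis N B ∧ σ = coneGen (s.image B) := by
  obtain ⟨d, b, s, hb, rfl⟩ := hσ
  obtain rfl := hb.card_eq hN
  refine ⟨basisOfLinearIndependentOfCardEqFinrank' b hb.1 (by simp), s, ?_, ?_⟩ <;>
    rw [coe_basisOfLinearIndependentOfCardEqFinrank']
  exact hb

theorem SmoothCone.exists_basis_univ (hN : IsLattice N) {σ : Set (Vr r)} (hσ : SmoothCone N σ)
    (hdim : spanDim σ = r) :
    ∃ B : Basis (Fin r) ℝ (Vr r), IsZBasis N B ∧ σ = coneGen (Finset.univ.image B) := by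
  obtain ⟨B, s, hB, rfl⟩ := hσ.exists_basis hN
  rw [spanDim_coneGen_image_basis] at hdim
  exact ⟨B, hB, by rw [Finset.eq_univ_of_card s (by simpa using hdim)]⟩

theorem SmoothCone.isClosed_of_spanDim_eq (hN : IsLattice N) {σ : Set (Vr r)}
    (hσ : SmoothCone N σ) (hdim : spanDim σ = r) : IsClosed σ := by
  obtain ⟨B, -, rfl⟩ := hσ.exists_basis_univ hN hdim
  exact isClosed_coneGen_univ_image_basis B

/-- The face `σ₁ ∩ σ₂` of `σ₁` is cut out by a functional that is minimal at the interior
point `y`, hence vanishes identically. -/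
theorem IsFan.subset_of_mem_interior (hfan : IsFan N F) {σ₁ σ₂ : Set (Vr r)} (h₁ : σ₁ ∈ F)
    (h₂ : σ₂ ∈ F) {y : Vr r} (hy₁ : y ∈ interior σ₁) (hy₂ : y ∈ σ₂) : σ₁ ⊆ σ₂ := by
  obtain ⟨m, hm, heq⟩ := (hfan.inter σ₁ h₁ σ₂ h₂).1
  have hmy : m y = 0 := by
    have hy : y ∈ σ₁ ∩ σ₂ := ⟨interior_subset hy₁, hy₂⟩
    rw [heq] at hy
    exact hy.2
  have hmin : IsLocalMin m y := by
    filter_upwards [mem_interior_iff_mem_nhds.1 hy₁] with z hz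
    rw [hmy]
    exact hm z hz
  have hm0 : LinearMap.toContinuousLinearMap m = 0 :=
    hmin.hasFDerivAt_eq_zero (LinearMap.toContinuousLinearMap m).hasFDerivAt
  intro x hx
  have hx' : x ∈ σ₁ ∩ {z | m z = 0} :=
    ⟨hx, by simpa using DFunLike.congr_fun hm0 x⟩
  rw [← heq] at hx'
  exact hx'.2

theorem IsFan.notMem_of_mem_interior (hfan : IsFan N F) (hss : SSymm F) {σ τ : Set (Vr r)}
    (hσF : σ ∈ F) (hτF : τ ∈ F) (hσ : spanDim σ = r) (hτ : spanDim τ = r - 1) {y : Vr r}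
    (hy : y ∈ interior σ) : y ∉ τ := fun hyτ => by
  have h : spanDim σ ≤ spanDim τ :=
    Submodule.finrank_mono (Submodule.span_mono (hfan.subset_of_mem_interior hσF hτF hy hyτ))
  have hr := hss.finrank_pos
  rw [finrank_fin_fun] at hr
  omega

theorem IsFan.coneGen_erase_mem (hfan : IsFan N F) {B : Basis (Fin r) ℝ (Vr r)}
    (hB : coneGen (Finset.univ.image B) ∈ F) (i : Fin r) :
    coneGen ((Finset.univ.erase i).image B) ∈ F :=
  hfan.faces _ hB _ ⟨B.coord i, fun _ hx => (mem_coneGen_univ_image_basis B).1 hx i,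
    (coneGen_univ_image_basis_inter_ker B i).symm⟩

theorem spanDim_coneGen_erase (B : Basis (Fin r) ℝ (Vr r)) (i : Fin r) :
    spanDim (coneGen ((Finset.univ.erase i).image B)) = r - 1 := by
  simp [spanDim_coneGen_image_basis]

theorem finrank_ker_coord (B : Basis (Fin r) ℝ (Vr r)) (i : Fin r) :
    finrank ℝ (LinearMap.ker (B.coord i)) = r - 1 := by
  rw [← span_coneGen_erase_eq_ker, ← spanDim, spanDim_coneGen_erase]


def codimOneSpans (F : Set (Set (Vr r))) : Set (Set (Vr r)) :=
  {h | ∃ τ ∈ F, spanDim τ = r - 1 ∧ h = (↑(Submodule.span ℝ τ) : Set (Vr r))}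

/-- `τ` lies in the union of the finitely many hyperplanes forming the codimension-one
skeleton, hence in one of them, which must then be its span. -/
theorem SSymm.span_subset_skeleton (hN : IsLattice N) (hss : SSymm F) {τ : Set (Vr r)}
    (hτ : SmoothCone N τ) (hτF : τ ∈ F) (hτdim : spanDim τ = r - 1) :
    (Submodule.span ℝ τ : Set (Vr r)) ⊆ ⋃₀ {τ' ∈ F | spanDim τ' = r - 1} := by
  obtain ⟨Hs, hHs, hskel⟩ := hss.2
  rw [finrank_fin_fun] at hskel
  choose! f hf0 hfH using hHs
  obtain ⟨B, s, -, rfl⟩ := hτ.exists_basis hN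
  have hcover : coneGen (s.image B) ⊆ ⋃ h ∈ (Hs : Set (Set (Vr r))),
      (LinearMap.ker (f h) : Set (Vr r)) := fun x hx => by
    have hskel' : x ∈ ⋃₀ {τ' ∈ F | spanDim τ' = r - 1} := ⟨_, ⟨hτF, hτdim⟩, hx⟩
    obtain ⟨h, hh, hxh⟩ := mem_sUnion.1 (hskel ▸ hskel')
    rw [hfH h hh] at hxh
    exact mem_iUnion₂.2 ⟨h, hh, hxh⟩
  obtain ⟨h, hh, hvanish⟩ :=
    exists_forall_apply_eq_zero_of_coneGen_subset_biUnion B s Hs.finite_toSet f hcover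
  have hle : Submodule.span ℝ (coneGen (s.image B)) ≤ LinearMap.ker (f h) := by
    rw [span_coneGen_image_basis, Submodule.span_le]
    rintro _ ⟨i, hi, rfl⟩
    exact hvanish i hi
  have hker := Module.Dual.finrank_ker_add_one_of_ne_zero (hf0 h hh)
  rw [finrank_fin_fun] at hker
  have heq := Submodule.eq_of_le_of_finrank_le hle (by rw [← spanDim, hτdim]; omega)
  rw [heq, hskel]
  intro x hx
  exact ⟨h, hh, by rw [hfH h hh]; exact hx⟩

theorem disjoint_interior_of_mem_codimOneSpans (hN : IsLattice N) (hfan : IsFan N F)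
    (hss : SSymm F) (hsmooth : ∀ σ ∈ F, SmoothCone N σ) {σ : Set (Vr r)} (hσF : σ ∈ F)
    (hσ : spanDim σ = r) {H : Set (Vr r)} (hH : H ∈ codimOneSpans F) : Disjoint (interior σ) H := by
  obtain ⟨τ, hτF, hτdim, rfl⟩ := hH
  refine disjoint_left.2 fun y hy hyτ => ?_
  obtain ⟨τ', ⟨hτ'F, hτ'dim⟩, hyτ'⟩ := hss.span_subset_skeleton hN (hsmooth τ hτF) hτF hτdim hyτ
  exact hfan.notMem_of_mem_interior hss hσF hτ'F hσ hτ'dim hy hyτ'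

/-- Completeness puts every point into some cone; a point outside the closed union of the
maximal cones would have a neighbourhood covered by the spans of the lower-dimensional ones. -/
theorem exists_full_cone_mem (hN : IsLattice N) (hfan : IsFan N F) (hss : SSymm F)
    (hsmooth : ∀ σ ∈ F, SmoothCone N σ) (x : Vr r) : ∃ σ ∈ F, spanDim σ = r ∧ x ∈ σ := by
  have hclosed : IsClosed (⋃ σ ∈ {σ ∈ F | spanDim σ = r}, σ) :=
    (hfan.finite.subset (sep_subset _ _)).isClosed_biUnion fun σ ⟨hσF, hσ⟩ =>
      (hsmooth σ hσF).isClosed_of_spanDim_eq hN hσ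
  by_contra! hx
  have hxC : x ∉ ⋃ σ ∈ {σ ∈ F | spanDim σ = r}, σ := by
    simp only [mem_iUnion₂, not_exists]
    exact fun σ ⟨hσF, hσ⟩ => hx σ hσF hσ
  have hcover : (⋃ σ ∈ {σ ∈ F | spanDim σ = r}, σ)ᶜ ⊆
      ⋃ σ ∈ {σ ∈ F | spanDim σ ≠ r}, (Submodule.span ℝ σ : Set (Vr r)) := by
    intro y hy
    obtain ⟨σ, hσF, hyσ⟩ := mem_sUnion.1 (hss.1 ▸ mem_univ y)
    have hσ : spanDim σ ≠ r := fun h => hy (mem_iUnion₂.2 ⟨σ, ⟨hσF, h⟩, hyσ⟩)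
    exact mem_iUnion₂.2 ⟨σ, ⟨hσF, hσ⟩, Submodule.subset_span hyσ⟩
  obtain ⟨σ, ⟨-, hσ⟩, htop⟩ := Submodule.exists_eq_top_of_isOpen_subset_biUnion
    (hfan.finite.subset (sep_subset _ _)) _ hclosed.isOpen_compl ⟨x, hxC⟩ hcover
  exact hσ (by rw [spanDim, htop, finrank_top, finrank_fin_fun])

theorem IsFan.mem_interior_of_notMem (hfan : IsFan N F) {B : Basis (Fin r) ℝ (Vr r)}
    (hB : coneGen (Finset.univ.image B) ∈ F) {x : Vr r} (hx : x ∈ coneGen (Finset.univ.image B))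
    (hxA : x ∉ ⋃₀ codimOneSpans F) : x ∈ interior (coneGen (Finset.univ.image B)) := by
  rw [interior_coneGen_univ_image_basis]
  refine fun i => ((mem_coneGen_univ_image_basis B).1 hx i).lt_of_ne fun h => hxA ?_
  refine ⟨_, ⟨_, hfan.coneGen_erase_mem hB i, spanDim_coneGen_erase B i, rfl⟩,
    Submodule.subset_span ?_⟩
  rw [← coneGen_univ_image_basis_inter_ker]
  exact ⟨hx, h.symm⟩

/-- Each chamber is the interior of a maximal cone: the interior is connected and misses the
arrangement, while the complement of the arrangement meets the cone only in its interior. -/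
theorem exists_basis_of_mem_chambers (hN : IsLattice N) (hfan : IsFan N F) (hss : SSymm F)
    (hsmooth : ∀ σ ∈ F, SmoothCone N σ) {A : Finset (Set (Vr r))}
    (hA : (A : Set (Set (Vr r))) = codimOneSpans F) {K : Set (Vr r)} (hK : K ∈ chambers A) :
    ∃ B : Basis (Fin r) ℝ (Vr r), IsZBasis N B ∧ coneGen (Finset.univ.image B) ∈ F ∧
      K = interior (coneGen (Finset.univ.image B)) := by
  obtain ⟨x, hx, rfl⟩ := hK
  rw [hA] at hx ⊢
  obtain ⟨σ, hσF, hσ, hxσ⟩ := exists_full_cone_mem hN hfan hss hsmooth x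
  obtain ⟨B, hB, rfl⟩ := (hsmooth σ hσF).exists_basis_univ hN hσ
  have hxint := hfan.mem_interior_of_notMem hσF hxσ hx
  refine ⟨B, hB, hσF, subset_antisymm ?_ ?_⟩
  · refine isPreconnected_connectedComponentIn.subset_left_of_subset_union isOpen_interior
      (isClosed_coneGen_univ_image_basis B).isOpen_compl
      (disjoint_compl_right.mono_left interior_subset) (fun z hz => ?_)
      ⟨x, mem_connectedComponentIn hx, hxint⟩
    by_cases hzσ : z ∈ coneGen (Finset.univ.image B)
    · exact Or.inl (hfan.mem_interior_of_notMem hσF hzσ (connectedComponentIn_subset _ _ hz))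
    · exact Or.inr hzσ
  · refine (convex_coneGen _).interior.isPreconnected.subset_connectedComponentIn hxint
      fun y hy hyA => ?_
    obtain ⟨H, hH, hyH⟩ := hyA
    exact disjoint_left.1 (disjoint_interior_of_mem_codimOneSpans hN hfan hss hsmooth hσF hσ hH)
      hy hyH

/-- The points `x + ε • y` with `ε > 0` accumulate at `x` and lie in the union of the finitely
many closed maximal cones. -/
theorem exists_full_cone_mem_and_add_smul_mem (hN : IsLattice N) (hfan : IsFan N F)
    (hss : SSymm F) (hsmooth : ∀ σ ∈ F, SmoothCone N σ) (x y : Vr r) :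
    ∃ σ ∈ F, spanDim σ = r ∧ x ∈ σ ∧ ∃ ε > (0 : ℝ), x + ε • y ∈ σ := by
  have hx : x ∈ closure ((fun ε : ℝ => x + ε • y) '' Ioi 0) := by
    have hlim : Tendsto (fun ε : ℝ => x + ε • y) (𝓝[>] 0) (𝓝 x) := by
      have hc : Continuous fun ε : ℝ => x + ε • y := by fun_prop
      simpa using (hc.tendsto 0).mono_left nhdsWithin_le_nhds
    exact mem_closure_of_tendsto hlim (eventually_mem_nhdsWithin.mono fun _ => mem_image_of_mem _)
  obtain ⟨σ, ⟨hσF, hσ⟩, hxσ, _, hεσ, ε, hε, rfl⟩ := exists_mem_of_mem_closure_of_subset_biUnion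
    (C := id) (hfan.finite.subset (sep_subset F fun σ => spanDim σ = r))
    (fun σ ⟨hσF, hσ⟩ => (hsmooth σ hσF).isClosed_of_spanDim_eq hN hσ)
    (fun p _ => by
      obtain ⟨σ, hσF, hσ, hp⟩ := exists_full_cone_mem hN hfan hss hsmooth p
      exact mem_iUnion₂.2 ⟨σ, ⟨hσF, hσ⟩, hp⟩) hx
  exact ⟨σ, hσF, hσ, hxσ, ε, hε, hεσ⟩

/-- Take a maximal cone `σ` containing the sum `x₀` of the generators of `τ` and a point
`x₀ + ε • y`, `ε > 0`. Then `τ ⊆ σ`, `x₀` is a boundary point of `σ`, and the coordinate of `σ`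
vanishing at `x₀` vanishes on `τ`, so its kernel is the span of `τ`. -/
theorem exists_coord_ker_eq_span (hN : IsLattice N) (hfan : IsFan N F) (hss : SSymm F)
    (hsmooth : ∀ σ ∈ F, SmoothCone N σ) {τ : Set (Vr r)} (hτF : τ ∈ F)
    (hτdim : spanDim τ = r - 1) (y : Vr r) :
    ∃ B : Basis (Fin r) ℝ (Vr r), IsZBasis N B ∧ coneGen (Finset.univ.image B) ∈ F ∧
      ∃ j, LinearMap.ker (B.coord j) = Submodule.span ℝ τ ∧ 0 ≤ B.coord j y := by
  obtain ⟨B₀, s, -, rfl⟩ := (hsmooth τ hτF).exists_basis hN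
  set x₀ := ∑ v ∈ s.image B₀, v
  obtain ⟨σ, hσF, hσ, hx₀σ, ε, hε, hεσ⟩ :=
    exists_full_cone_mem_and_add_smul_mem hN hfan hss hsmooth x₀ y
  obtain ⟨B, hB, rfl⟩ := (hsmooth σ hσF).exists_basis_univ hN hσ
  have hτσ := (hfan.inter _ hτF _ hσF).1.coneGen_subset hx₀σ
  obtain ⟨j, hj⟩ : ∃ j, B.coord j x₀ = 0 := by
    by_contra! h
    refine hfan.notMem_of_mem_interior hss hσF hτF hσ hτdim ?_ (sum_mem_coneGen _)
    rw [interior_coneGen_univ_image_basis]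
    exact fun i => ((mem_coneGen_univ_image_basis B).1 hx₀σ i).lt_of_ne (h i).symm
  have hτker : coneGen (s.image B₀) ⊆ LinearMap.ker (B.coord j) := fun x hx =>
    apply_eq_zero_of_mem_coneGen
      (fun v hv => (mem_coneGen_univ_image_basis B).1 (hτσ (mem_coneGen_of_mem hv)) j) hj hx
  refine ⟨B, hB, hσF, j, ?_, ?_⟩
  · refine (Submodule.eq_of_le_of_finrank_le (Submodule.span_le.2 hτker) ?_).symm
    rw [finrank_ker_coord, ← spanDim, hτdim]
  · have hj' := (mem_coneGen_univ_image_basis B).1 hεσ j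
    rw [map_add, map_smul, hj, zero_add, smul_eq_mul] at hj'
    exact nonneg_of_mul_nonneg_right hj' hε

end Fan

section Roots

variable {r : ℕ} {N : AddSubgroup (Vr r)} {F : Set (Set (Vr r))}

def roots (N : AddSubgroup (Vr r)) (F : Set (Set (Vr r))) : Set (Vr r →ₗ[ℝ] ℝ) :=
  {α | ∃ b : Basis (Fin r) ℝ (Vr r), IsZBasis N ⇑b ∧
    coneGen (Finset.univ.image ⇑b) ∈ F ∧ ∃ i : Fin r, α = b.coord i}

theorem ne_zero_of_mem_roots {α : Vr r →ₗ[ℝ] ℝ} (hα : α ∈ roots N F) : α ≠ 0 := by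
  obtain ⟨B, -, -, i, rfl⟩ := hα
  intro h
  simpa using DFunLike.congr_fun h (B i)

theorem exists_apply_eq_one_of_mem_roots {α : Vr r →ₗ[ℝ] ℝ} (hα : α ∈ roots N F) :
    ∃ v ∈ N, α v = 1 := by
  obtain ⟨B, hB, -, i, rfl⟩ := hα
  exact ⟨B i, hB.apply_mem i, by simp⟩

theorem exists_apply_eq_intCast_of_mem_roots {α : Vr r →ₗ[ℝ] ℝ} (hα : α ∈ roots N F)
    {x : Vr r} (hx : x ∈ N) : ∃ k : ℤ, α x = k := by
  obtain ⟨B, hB, -, i, rfl⟩ := hα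
  exact hB.exists_coord_eq_intCast hx i

/-- The factor `c` is an integer with integral inverse, since `α` and `β` take integral
values on `N` and each takes the value `1` somewhere on `N`. -/
theorem eq_or_eq_neg_of_mem_roots {α β : Vr r →ₗ[ℝ] ℝ} (hα : α ∈ roots N F)
    (hβ : β ∈ roots N F) {c : ℝ} (hc : β = c • α) : β = α ∨ β = -α := by
  obtain ⟨v, hvN, hv⟩ := exists_apply_eq_one_of_mem_roots hα
  obtain ⟨w, hwN, hw⟩ := exists_apply_eq_one_of_mem_roots hβ
  obtain ⟨m, hm⟩ := exists_apply_eq_intCast_of_mem_roots hβ hvN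
  obtain ⟨k, hk⟩ := exists_apply_eq_intCast_of_mem_roots hα hwN
  have hcm : c = m := by simpa [hc, hv] using hm
  have hmk : m * k = 1 := by
    have : c * α w = 1 := by simpa [hc] using hw
    exact_mod_cast hcm ▸ hk ▸ this
  rcases Int.eq_one_or_neg_one_of_mul_eq_one hmk with h | h
  · exact Or.inl (by ext; simp [hc, hcm, h])
  · exact Or.inr (by ext; simp [hc, hcm, h])

theorem eq_or_eq_neg_of_ker_eq {α β : Vr r →ₗ[ℝ] ℝ} (hα : α ∈ roots N F)
    (hβ : β ∈ roots N F) (h : LinearMap.ker α = LinearMap.ker β) : β = α ∨ β = -α := by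
  obtain ⟨v, -, hv⟩ := exists_apply_eq_one_of_mem_roots hα
  exact eq_or_eq_neg_of_mem_roots hα hβ (LinearMap.eq_apply_smul_of_ker_le hv h.le)

theorem ker0_eq_ker (α : Vr r →ₗ[ℝ] ℝ) : ker0 α = LinearMap.ker α := rfl

theorem ker0_mem_codimOneSpans (hfan : IsFan N F) {α : Vr r →ₗ[ℝ] ℝ} (hα : α ∈ roots N F) :
    ker0 α ∈ codimOneSpans F := by
  obtain ⟨B, -, hBF, i, rfl⟩ := hα
  exact ⟨_, hfan.coneGen_erase_mem hBF i, spanDim_coneGen_erase B i,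
    by rw [span_coneGen_erase_eq_ker, ker0_eq_ker]⟩

theorem exists_mem_roots_ker0_eq (hN : IsLattice N) (hfan : IsFan N F) (hss : SSymm F)
    (hsmooth : ∀ σ ∈ F, SmoothCone N σ) {H : Set (Vr r)} (hH : H ∈ codimOneSpans F) :
    ∃ α ∈ roots N F, ker0 α = H := by
  obtain ⟨τ, hτF, hτdim, rfl⟩ := hH
  obtain ⟨B, hB, hBF, j, hker, -⟩ := exists_coord_ker_eq_span hN hfan hss hsmooth hτF hτdim 0
  exact ⟨B.coord j, ⟨B, hB, hBF, j, rfl⟩, by rw [ker0_eq_ker, hker]⟩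

theorem roots_finite (hfan : IsFan N F) : (roots N F).Finite := by
  have hspans : (codimOneSpans F).Finite := by
    refine (hfan.finite.image fun τ => (Submodule.span ℝ τ : Set (Vr r))).subset ?_
    rintro _ ⟨τ, hτF, -, rfl⟩
    exact mem_image_of_mem _ hτF
  have hsub : roots N F ⊆ ⋃ H ∈ codimOneSpans F, {α | α ∈ roots N F ∧ ker0 α = H} :=
    fun α hα => mem_iUnion₂.2 ⟨_, ker0_mem_codimOneSpans hfan hα, hα, rfl⟩
  refine (hspans.biUnion fun H _ => ?_).subset hsub
  show {α | α ∈ roots N F ∧ ker0 α = H}.Finite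
  rcases eq_empty_or_nonempty {α | α ∈ roots N F ∧ ker0 α = H} with he | ⟨α, hα, hαH⟩
  · exact he ▸ finite_empty
  refine (finite_singleton (-α)).insert α |>.subset fun β ⟨hβ, hβH⟩ => ?_
  exact eq_or_eq_neg_of_ker_eq hα hβ (SetLike.coe_injective (hαH.trans hβH.symm))

/-- The facet of the maximal cone of `α` opposite to `α` is also a facet of a maximal cone on
the other side of `ker α`, and the corresponding root is `-α`. -/
theorem neg_mem_roots (hN : IsLattice N) (hfan : IsFan N F) (hss : SSymm F)
    (hsmooth : ∀ σ ∈ F, SmoothCone N σ) {α : Vr r →ₗ[ℝ] ℝ} (hα : α ∈ roots N F) :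
    -α ∈ roots N F := by
  obtain ⟨B, hB, hBF, i, rfl⟩ := hα
  obtain ⟨B', hB', hB'F, j, hker, hsign⟩ := exists_coord_ker_eq_span hN hfan hss hsmooth
    (hfan.coneGen_erase_mem hBF i) (spanDim_coneGen_erase B i) (-B i)
  rw [span_coneGen_erase_eq_ker] at hker
  have hβ : B'.coord j ∈ roots N F := ⟨B', hB', hB'F, j, rfl⟩
  rcases eq_or_eq_neg_of_ker_eq ⟨B, hB, hBF, i, rfl⟩ hβ hker.symm with h | h
  · norm_num [h] at hsign
  · exact h ▸ hβ

theorem coord_mem_BK (hfan : IsFan N F) {A : Finset (Set (Vr r))}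
    (hA : (A : Set (Set (Vr r))) = codimOneSpans F) {R : Finset (Vr r →ₗ[ℝ] ℝ)}
    (hR : (R : Set (Vr r →ₗ[ℝ] ℝ)) = roots N F) {B : Basis (Fin r) ℝ (Vr r)}
    (hB : IsZBasis N B) (hBF : coneGen (Finset.univ.image B) ∈ F) (i : Fin r) :
    B.coord i ∈ BK A R (interior (coneGen (Finset.univ.image B))) := by
  have hi : B.coord i ∈ roots N F := ⟨B, hB, hBF, i, rfl⟩
  refine Finset.mem_filter.2 ⟨by rw [← Finset.mem_coe, hR]; exact hi, ⟨?_, ?_⟩, fun x hx => ?_⟩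
  · rw [← Finset.mem_coe, hA]
    exact ker0_mem_codimOneSpans hfan hi
  · rw [closure_interior_coneGen_univ_image_basis, inter_comm, ker0,
      coneGen_univ_image_basis_inter_ker, spanDim_coneGen_erase]
  · exact (mem_coneGen_univ_image_basis B).1 (interior_subset hx) i

theorem mem_span_int_BK (hfan : IsFan N F) {A : Finset (Set (Vr r))}
    (hA : (A : Set (Set (Vr r))) = codimOneSpans F) {R : Finset (Vr r →ₗ[ℝ] ℝ)}
    (hR : (R : Set (Vr r →ₗ[ℝ] ℝ)) = roots N F) {B : Basis (Fin r) ℝ (Vr r)}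
    (hB : IsZBasis N B) (hBF : coneGen (Finset.univ.image B) ∈ F) {β : Vr r →ₗ[ℝ] ℝ}
    (hβ : β ∈ roots N F) :
    β ∈ Submodule.span ℤ (BK A R (interior (coneGen (Finset.univ.image B))) : Set _) := by
  rw [← B.sum_dual_apply_smul_coord β]
  refine Submodule.sum_mem _ fun i _ => ?_
  obtain ⟨k, hk⟩ := exists_apply_eq_intCast_of_mem_roots hβ (hB.apply_mem i)
  rw [hk, Int.cast_smul_eq_zsmul ℝ k (B.coord i)]
  exact Submodule.smul_mem _ k (Submodule.subset_span (coord_mem_BK hfan hA hR hB hBF i))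

theorem isOpenSimplicialCone_interior (B : Basis (Fin r) ℝ (Vr r)) :
    IsOpenSimplicialCone (interior (coneGen (Finset.univ.image B))) := by
  refine ⟨B, B.linearIndependent, ?_⟩
  rw [interior_coneGen_univ_image_basis]
  ext x
  constructor
  · exact fun hx => ⟨fun i => B.coord i x, hx, (B.sum_repr x).symm⟩
  · rintro ⟨c, hc, rfl⟩ i
    simpa [B.coord_sum_smul] using hc i

end Roots

/-- the arrangement of spans of codimension-one cones of a smooth
strongly symmetric fan is simplicial and carries a set of covectors `R` making it a
crystallographic arrangement; `R` can be taken to be the union over the maximal cones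
of the dual bases of the ℤ-bases generating them. -/
theorem stmt9 {r : ℕ} (N : AddSubgroup (Vr r)) (F : Set (Set (Vr r)))
    (hN : IsLattice N) (hfan : IsFan N F) (hss : SSymm F)
    (hsmooth : ∀ σ ∈ F, SmoothCone N σ)
    (A : Finset (Set (Vr r)))
    (hA : (A : Set (Set (Vr r))) =
      { h | ∃ τ ∈ F, spanDim τ = r - 1 ∧ h = (↑(Submodule.span ℝ τ) : Set (Vr r)) }) :
    ∃ R : Finset (Vr r →ₗ[ℝ] ℝ), IsCrystArr A R ∧
      ∀ α : Vr r →ₗ[ℝ] ℝ, α ∈ R ↔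
        ∃ b : Module.Basis (Fin r) ℝ (Vr r), IsZBasis N ⇑b ∧
          coneGen (Finset.univ.image ⇑b) ∈ F ∧ ∃ i : Fin r, α = b.coord i := by
  have hfin := roots_finite hfan
  have hR : (hfin.toFinset : Set (Vr r →ₗ[ℝ] ℝ)) = roots N F := hfin.coe_toFinset
  refine ⟨hfin.toFinset, ⟨fun K hK => ?_, ?_, ?_, ?_, ?_, fun K hK β hβ => ?_⟩,
    fun α => hfin.mem_toFinset⟩
  · obtain ⟨B, -, -, rfl⟩ := exists_basis_of_mem_chambers hN hfan hss hsmooth hA hK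
    exact isOpenSimplicialCone_interior B
  · rw [hR, hA]
    ext H
    exact ⟨fun hH => exists_mem_roots_ker0_eq hN hfan hss hsmooth hH,
      fun ⟨α, hα, hαH⟩ => hαH ▸ ker0_mem_codimOneSpans hfan hα⟩
  · exact fun α hα => ne_zero_of_mem_roots (hfin.mem_toFinset.1 hα)
  · exact fun α hα =>
      hfin.mem_toFinset.2 (neg_mem_roots hN hfan hss hsmooth (hfin.mem_toFinset.1 hα))
  · exact fun α hα β hβ ⟨c, hc⟩ =>
      eq_or_eq_neg_of_mem_roots (hfin.mem_toFinset.1 hα) (hfin.mem_toFinset.1 hβ) hc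
  · obtain ⟨B, hB, hBF, rfl⟩ := exists_basis_of_mem_chambers hN hfan hss hsmooth hA hK
    exact mem_span_int_BK hfan hA hR hB hBF (hfin.mem_toFinset.1 hβ)
end
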